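/- Let G be a group with finite generating set S and Cayley graph Γ. For every g ∈ G and s ∈ S ∪ S⁻¹ with |sg| = |g| + 1, the vertex set of the cone C(sg) equals the intersection of the vertex set of C(g) with the right translate C(s)·g = {kg : k a vertex of C(s)}; that is, C(sg) = C(g) ∩ C(s)·g. -/

import Mathlib

variable {G : Type*} [Group G]

noncomputable def wordLength (S : Set G) (g : G) : ℕ :=
  sInf {n | ∃ w : List G, (∀ x ∈ w, x ∈ S ∪ S⁻¹) ∧ w.length = n ∧ w.prod = g}

def cayley (S : Set G) : SimpleGraph G where
  Adj g h := g ≠ h ∧ h * g⁻¹ ∈ S ∪ S⁻¹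
  symm := ⟨by
    rintro g h ⟨hne, hmem⟩
    refine ⟨hne.symm, ?_⟩
    have key : g * h⁻¹ = (h * g⁻¹)⁻¹ := by group
    rw [key]
    rcases hmem with h1 | h1
    · exact Or.inr (by simpa [Set.mem_inv] using h1)
    · exact Or.inl (by simpa [Set.mem_inv] using h1)⟩
  loopless := ⟨fun g h => h.1 rfl⟩

def coneSet (S : Set G) (g : G) : Set G :=
  {h | wordLength S h = wordLength S g + (cayley S).dist g h}

lemma self_mem_coneSet (S : Set G) (g : G) : g ∈ coneSet S g := by
  simp [coneSet]

/-!
With `x = h * g⁻¹`, the Cayley distance `d(g, h)` is the word length `|x|`, so each cone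
condition is an equality case of the triangle inequality for word length. Since `|sg| = |g| + 1`
and `|s| = 1`, the condition `h ∈ C(sg)` reads `|h| = |g| + 1 + |x s⁻¹|`, while
`|h| ≤ |g| + |x| ≤ |g| + 1 + |x s⁻¹|`; so it holds iff both inequalities are equalities, which
say `h ∈ C(g)` and `x ∈ C(s)`.
-/

section CayleyGraph

variable {S : Set G}

lemma exists_word (hgen : Subgroup.closure S = ⊤) (g : G) :
    ∃ w : List G, (∀ x ∈ w, x ∈ S ∪ S⁻¹) ∧ w.prod = g :=
  Submonoid.exists_list_of_mem_closure <| by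
    rw [← Subgroup.closure_toSubmonoid, hgen]
    trivial

lemma wordLength_le_length (w : List G) (hw : ∀ x ∈ w, x ∈ S ∪ S⁻¹) :
    wordLength S w.prod ≤ w.length :=
  Nat.sInf_le ⟨w, hw, rfl, rfl⟩

lemma exists_word_length_eq_wordLength (hgen : Subgroup.closure S = ⊤) (g : G) :
    ∃ w : List G, (∀ x ∈ w, x ∈ S ∪ S⁻¹) ∧ w.length = wordLength S g ∧ w.prod = g := by
  obtain ⟨w, hw, rfl⟩ := exists_word hgen g
  exact Nat.sInf_mem
    (s := {n | ∃ v : List G, (∀ x ∈ v, x ∈ S ∪ S⁻¹) ∧ v.length = n ∧ v.prod = w.prod})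
    ⟨_, w, hw, rfl, rfl⟩

lemma wordLength_le_one_of_mem {s : G} (hs : s ∈ S ∪ S⁻¹) : wordLength S s ≤ 1 := by
  simpa using wordLength_le_length [s] (by simpa using hs)

lemma wordLength_mul_le (hgen : Subgroup.closure S = ⊤) (a b : G) :
    wordLength S (a * b) ≤ wordLength S a + wordLength S b := by
  obtain ⟨u, hu, hu_len, rfl⟩ := exists_word_length_eq_wordLength hgen a
  obtain ⟨v, hv, hv_len, rfl⟩ := exists_word_length_eq_wordLength hgen b
  have := wordLength_le_length (u ++ v) (by simpa [or_imp, forall_and] using And.intro hu hv)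
  simp_all

lemma cayley_adj_mul_left {a : G} (ha : a ∈ S ∪ S⁻¹) (ha₁ : a ≠ 1) (x : G) :
    (cayley S).Adj x (a * x) :=
  ⟨fun hx => ha₁ (by simpa using hx.symm), by simpa using ha⟩

lemma exists_walk_length_le (w : List G) (hw : ∀ x ∈ w, x ∈ S ∪ S⁻¹) (g : G) :
    ∃ p : (cayley S).Walk g (w.prod * g), p.length ≤ w.length := by
  induction w with
  | nil =>
    rw [List.prod_nil, one_mul]
    exact ⟨.nil, le_rfl⟩
  | cons a w ih =>
    obtain ⟨p, hp⟩ := ih fun x hx => hw x (List.mem_cons_of_mem _ hx)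
    rw [List.prod_cons, mul_assoc]
    by_cases ha₁ : a = 1
    · subst ha₁
      rw [one_mul]
      exact ⟨p, hp.trans (by simp)⟩
    · refine ⟨p.concat (cayley_adj_mul_left (hw a List.mem_cons_self) ha₁ _), ?_⟩
      simpa using hp

lemma wordLength_mul_inv_le_length (hgen : Subgroup.closure S = ⊤) {g h : G}
    (p : (cayley S).Walk g h) : wordLength S (h * g⁻¹) ≤ p.length := by
  induction p with
  | nil => simpa using wordLength_le_length (S := S) [] (by simp)
  | @cons g m h e p ih =>
    calc wordLength S (h * g⁻¹) = wordLength S (h * m⁻¹ * (m * g⁻¹)) := by group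
      _ ≤ wordLength S (h * m⁻¹) + wordLength S (m * g⁻¹) := wordLength_mul_le hgen _ _
      _ ≤ p.length + 1 := add_le_add ih (wordLength_le_one_of_mem e.2)
      _ = (SimpleGraph.Walk.cons e p).length := rfl

lemma cayley_dist_eq_wordLength (hgen : Subgroup.closure S = ⊤) (g h : G) :
    (cayley S).dist g h = wordLength S (h * g⁻¹) := by
  obtain ⟨w, hw, hw_len, hw_prod⟩ := exists_word_length_eq_wordLength hgen (h * g⁻¹)
  have h_walk := exists_walk_length_le w hw g
  rw [hw_prod, inv_mul_cancel_right] at h_walk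
  obtain ⟨p, hp⟩ := h_walk
  obtain ⟨q, hq⟩ := SimpleGraph.Reachable.exists_walk_length_eq_dist ⟨p⟩
  refine le_antisymm ((SimpleGraph.dist_le p).trans (hw_len ▸ hp)) ?_
  exact hq ▸ wordLength_mul_inv_le_length hgen q

lemma mem_coneSet_iff (hgen : Subgroup.closure S = ⊤) {g h : G} :
    h ∈ coneSet S g ↔ wordLength S h = wordLength S g + wordLength S (h * g⁻¹) := by
  rw [coneSet, Set.mem_ofPred_eq, cayley_dist_eq_wordLength hgen]

end CayleyGraph

theorem cone_eq_inter_translate_general (S : Set G)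
    (hgen : Subgroup.closure S = ⊤)
    (g s : G) (hs : s ∈ S ∪ S⁻¹) (hlen : wordLength S (s * g) = wordLength S g + 1) :
    coneSet S (s * g) = coneSet S g ∩ ((fun k => k * g) '' coneSet S s) := by
  have hs_len : wordLength S s = 1 :=
    le_antisymm (wordLength_le_one_of_mem hs) (by have := wordLength_mul_le hgen s g; omega)
  ext h
  rw [Set.image_mul_right, Set.mem_inter_iff, Set.mem_preimage, mem_coneSet_iff hgen,
    mem_coneSet_iff hgen, mem_coneSet_iff hgen, hlen, hs_len, mul_inv_rev, ← mul_assoc]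
  have h_step := wordLength_mul_le hgen (h * g⁻¹ * s⁻¹) s
  have h_triangle := wordLength_mul_le hgen (h * g⁻¹) g
  rw [inv_mul_cancel_right, hs_len] at h_step
  rw [inv_mul_cancel_right] at h_triangle
  omega

/-- For `s ∈ S ∪ S⁻¹` with `|sg| = |g| + 1`, the cone `C(sg)` is the intersection of the
cone `C(g)` with the right translate `C(s)·g`. -/
theorem cone_eq_inter_translate (S : Set G) (hS : S.Finite)
    (hgen : Subgroup.closure S = ⊤)
    (g s : G) (hs : s ∈ S ∪ S⁻¹) (hlen : wordLength S (s * g) = wordLength S g + 1) :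
    coneSet S (s * g) = coneSet S g ∩ ((fun k => k * g) '' coneSet S s) :=
  cone_eq_inter_translate_general S hgen g s hs hlen
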